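/- arXiv:1010.4454 — 4 statements merged into one kernel-verified Lean document; each statement's English description precedes it below -/
import Mathlib

section
/- Let f, v be smooth x-periodic functions such that v(t,x) ≠ 0 for all (t,x), and suppose there exist two distinct nonzero reals λ₁ ≠ λ₂ such that for λ ∈ {λ₁, λ₂}, with m(t,x) = λ(μ(f)(t) − f_{xx}(t,x)) − λ²v(t,x)², U = [[0, 1], [m, 0]] and V = [[−f_x/2, f − 1/(2λ)], [−f_{xx}/2 + (f − 1/(2λ))·m, f_x/2]], the zero-curvature equation ∂_t U − ∂_x V + UV − VU = 0 holds at every point. Then (f,v) solves the 2-μHS system with γ₁ = γ₂ = γ₃ = 0, i.e., −f_{xxt} = 2μ(f)f_x − 2f_xf_{xx} − ff_{xxx} + vv_x and v_t = (vf)_x. -/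
open MeasureTheory

noncomputable section

/-- A smooth function on `ℝ × ℝ` that is 1-periodic in the space variable `x`
(the second argument); the first argument is time `t`. -/
def SmoothXPeriodic (w : ℝ → ℝ → ℝ) : Prop :=
  ContDiff ℝ (⊤ : ℕ∞) (Function.uncurry w) ∧ ∀ t x, w t (x + 1) = w t x

/-- Partial derivative in `x`. -/
def pdx (w : ℝ → ℝ → ℝ) : ℝ → ℝ → ℝ := fun t x => deriv (w t) x

/-- Partial derivative in `t`. -/
def pdt (w : ℝ → ℝ → ℝ) : ℝ → ℝ → ℝ := fun t x => deriv (fun s => w s x) t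

/-- The spatial mean `μ(w)(t) = ∫₀¹ w(t,x) dx`. -/
def mean (w : ℝ → ℝ → ℝ) : ℝ → ℝ := fun t => ∫ x in (0:ℝ)..1, w t x

/-- The two-component μ-Hunter–Saxton system with parameters `γ₁ γ₂ γ₃`:
`-f_{xxt} = 2μ(f)f_x - 2f_x f_{xx} - f f_{xxx} + v v_x - γ₁ f_{xxx} + γ₂ v_{xx}`,
`v_t = (vf)_x - γ₂ f_{xx} + 2γ₃ v_x`. -/
def Solves2muHS (γ₁ γ₂ γ₃ : ℝ) (f v : ℝ → ℝ → ℝ) : Prop :=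
  (∀ t x, -(pdt (pdx (pdx f)) t x) =
      2 * mean f t * pdx f t x - 2 * pdx f t x * pdx (pdx f) t x
        - f t x * pdx (pdx (pdx f)) t x + v t x * pdx v t x
        - γ₁ * pdx (pdx (pdx f)) t x + γ₂ * pdx (pdx v) t x) ∧
  (∀ t x, pdt v t x =
      pdx (fun t x => v t x * f t x) t x - γ₂ * pdx (pdx f) t x
        + 2 * γ₃ * pdx v t x)

/-- Entrywise partial derivative in `x` of a matrix-valued function. -/
def mpdx (M : ℝ → ℝ → Matrix (Fin 2) (Fin 2) ℝ) : ℝ → ℝ → Matrix (Fin 2) (Fin 2) ℝ :=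
  fun t x => Matrix.of fun i j => deriv (fun y => M t y i j) x

/-- Entrywise partial derivative in `t` of a matrix-valued function. -/
def mpdt (M : ℝ → ℝ → Matrix (Fin 2) (Fin 2) ℝ) : ℝ → ℝ → Matrix (Fin 2) (Fin 2) ℝ :=
  fun t x => Matrix.of fun i j => deriv (fun s => M s x i j) t

/-- `m = λΛ(f) - λ²v²`. -/
def laxm (l : ℝ) (f v : ℝ → ℝ → ℝ) : ℝ → ℝ → ℝ :=
  fun t x => l * (mean f t - pdx (pdx f) t x) - l ^ 2 * (v t x) ^ 2

/-- The `U`-matrix of the Lax pair. -/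
def laxU (l : ℝ) (f v : ℝ → ℝ → ℝ) : ℝ → ℝ → Matrix (Fin 2) (Fin 2) ℝ :=
  fun t x => !![0, 1; laxm l f v t x, 0]

/-- The `V`-matrix of the Lax pair. -/
def laxV (l : ℝ) (f v : ℝ → ℝ → ℝ) : ℝ → ℝ → Matrix (Fin 2) (Fin 2) ℝ :=
  fun t x =>
    !![-(pdx f t x) / 2, f t x - 1 / (2 * l);
       -(pdx (pdx f) t x) / 2 + (f t x - 1 / (2 * l)) * laxm l f v t x,
       pdx f t x / 2]


section aux

variable {w : ℝ → ℝ → ℝ}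

private lemma key_x (h : ContDiff ℝ (⊤ : ℕ∞) (Function.uncurry w)) (t x : ℝ) :
    HasDerivAt (w t) (fderiv ℝ (Function.uncurry w) (t, x) (0, 1)) x :=
  ((h.differentiable (by simp) (t, x)).hasFDerivAt).comp_hasDerivAt x
    ((hasDerivAt_const x t).prodMk (hasDerivAt_id x))

private lemma key_t (h : ContDiff ℝ (⊤ : ℕ∞) (Function.uncurry w)) (t x : ℝ) :
    HasDerivAt (fun s => w s x) (fderiv ℝ (Function.uncurry w) (t, x) (1, 0)) t :=
  by have := ((h.differentiable (by simp) (t, x)).hasFDerivAt).comp_hasDerivAt t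
        ((hasDerivAt_id' t).prodMk (hasDerivAt_const t x)); exact this

lemma pdx_eq (h : ContDiff ℝ (⊤ : ℕ∞) (Function.uncurry w)) (t x : ℝ) :
    pdx w t x = fderiv ℝ (Function.uncurry w) (t, x) (0, 1) := (key_x h t x).deriv

lemma pdt_eq (h : ContDiff ℝ (⊤ : ℕ∞) (Function.uncurry w)) (t x : ℝ) :
    pdt w t x = fderiv ℝ (Function.uncurry w) (t, x) (1, 0) := (key_t h t x).deriv

lemma hasDerivAt_pdx (h : ContDiff ℝ (⊤ : ℕ∞) (Function.uncurry w)) (t x : ℝ) :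
    HasDerivAt (w t) (pdx w t x) x := by rw [pdx_eq h]; exact key_x h t x

lemma hasDerivAt_pdt (h : ContDiff ℝ (⊤ : ℕ∞) (Function.uncurry w)) (t x : ℝ) :
    HasDerivAt (fun s => w s x) (pdt w t x) t := by rw [pdt_eq h]; exact key_t h t x

lemma contDiff_pdx (h : ContDiff ℝ (⊤ : ℕ∞) (Function.uncurry w)) :
    ContDiff ℝ (⊤ : ℕ∞) (Function.uncurry (pdx w)) := by
  have e : Function.uncurry (pdx w)
      = fun p : ℝ × ℝ => fderiv ℝ (Function.uncurry w) p (0, 1) := by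
    funext p; exact pdx_eq h p.1 p.2
  rw [e]
  exact (h.fderiv_right (by simp)).clm_apply contDiff_const

lemma contDiff_pdt (h : ContDiff ℝ (⊤ : ℕ∞) (Function.uncurry w)) :
    ContDiff ℝ (⊤ : ℕ∞) (Function.uncurry (pdt w)) := by
  have e : Function.uncurry (pdt w)
      = fun p : ℝ × ℝ => fderiv ℝ (Function.uncurry w) p (1, 0) := by
    funext p; exact pdt_eq h p.1 p.2
  rw [e]
  exact (h.fderiv_right (by simp)).clm_apply contDiff_const

lemma continuous_slice (h : ContDiff ℝ (⊤ : ℕ∞) (Function.uncurry w)) (t : ℝ) :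
    Continuous (w t) :=
  h.continuous.comp (continuous_const.prodMk continuous_id)

lemma pdx_periodic (hp : ∀ t x, w t (x + 1) = w t x) (t x : ℝ) :
    pdx w t (x + 1) = pdx w t x := by
  have e : (fun y => w t (y + 1)) = w t := funext fun y => hp t y
  calc pdx w t (x + 1) = deriv (fun y => w t (y + 1)) x := (deriv_comp_add_const (w t) 1 x).symm
    _ = pdx w t x := by rw [e]; rfl

lemma hasDerivAt_mean (h : ContDiff ℝ (⊤ : ℕ∞) (Function.uncurry w)) (t : ℝ) :
    HasDerivAt (mean w) (∫ x in (0:ℝ)..1, pdt w t x) t := by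
  obtain ⟨C, hC⟩ := ((isCompact_Icc (a := t - 1) (b := t + 1)).prod
      (isCompact_Icc (a := (0:ℝ)) (b := 1))).exists_bound_of_continuousOn
      (contDiff_pdt h).continuous.continuousOn
  refine (intervalIntegral.hasDerivAt_integral_of_dominated_loc_of_deriv_le
    (F := w) (F' := pdt w) (bound := fun _ => C) (Metric.ball_mem_nhds t one_pos)
    (Filter.Eventually.of_forall fun s => (continuous_slice h s).aestronglyMeasurable)
    ((continuous_slice h t).intervalIntegrable 0 1)
    (continuous_slice (contDiff_pdt h) t).aestronglyMeasurable
    (Filter.Eventually.of_forall fun x hx s hs => ?_)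
    intervalIntegrable_const
    (Filter.Eventually.of_forall fun x _ s _ => hasDerivAt_pdt h s x)).2
  have hx' : x ∈ Set.Icc (0:ℝ) 1 := by
    rw [Set.uIoc_of_le (zero_le_one)] at hx
    exact ⟨hx.1.le, hx.2⟩
  rw [Real.ball_eq_Ioo] at hs
  exact hC (s, x) ⟨⟨hs.1.le, hs.2.le⟩, hx'⟩

end aux

/-- Converse: if the zero-curvature equation holds for two distinct nonzero
spectral parameters and `v` never vanishes, then `(f,v)` solves the 2-μHS
system with `γ₁ = γ₂ = γ₃ = 0`. -/
theorem lax_pair_implies_twoMuHS (f v : ℝ → ℝ → ℝ)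
    (hf : SmoothXPeriodic f) (hv : SmoothXPeriodic v)
    (hvne : ∀ t x, v t x ≠ 0)
    (l₁ l₂ : ℝ) (hl₁ : l₁ ≠ 0) (hl₂ : l₂ ≠ 0) (hne : l₁ ≠ l₂)
    (hzc : ∀ l ∈ ({l₁, l₂} : Set ℝ), ∀ t x,
      mpdt (laxU l f v) t x - mpdx (laxV l f v) t x
        + laxU l f v t x * laxV l f v t x
        - laxV l f v t x * laxU l f v t x = 0) :
    Solves2muHS 0 0 0 f v := by
  obtain ⟨hfc, hfp⟩ := hf
  obtain ⟨hvc, hvp⟩ := hv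
  have hfx := contDiff_pdx hfc
  have hfxx := contDiff_pdx hfx
  have hfxp : ∀ t x, pdx f t (x + 1) = pdx f t x := pdx_periodic hfp
  have hfxxp : ∀ t x, pdx (pdx f) t (x + 1) = pdx (pdx f) t x := pdx_periodic hfxp
  have key : ∀ l ∈ ({l₁, l₂} : Set ℝ), l ≠ 0 → ∀ t x : ℝ,
      ((∫ y in (0:ℝ)..1, pdt f t y) - pdt (pdx (pdx f)) t x - 2 * pdx f t x * mean f t
        + 2 * pdx f t x * pdx (pdx f) t x + f t x * pdx (pdx (pdx f)) t x
        - v t x * pdx v t x)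
      + l * (-(2 * v t x * pdt v t x) + 2 * pdx f t x * (v t x) ^ 2
        + 2 * f t x * v t x * pdx v t x) = 0 := by
    intro l hl hlne t x
    have hA : HasDerivAt (fun s => laxm l f v s x)
        (l * ((∫ y in (0:ℝ)..1, pdt f t y) - pdt (pdx (pdx f)) t x)
          - l ^ 2 * (2 * v t x * pdt v t x)) t := by
      have h1 : HasDerivAt (fun s => mean f s - pdx (pdx f) s x)
          ((∫ y in (0:ℝ)..1, pdt f t y) - pdt (pdx (pdx f)) t x) t :=
        (hasDerivAt_mean hfc t).sub (hasDerivAt_pdt hfxx t x)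
      have h2 : HasDerivAt (fun s => (v s x) ^ 2) (2 * v t x * pdt v t x) t := by
        have := (hasDerivAt_pdt hvc t x).fun_pow 2
        simpa using this
      exact (h1.const_mul l).sub (h2.const_mul (l ^ 2))
    have hmx : HasDerivAt (fun y => laxm l f v t y)
        (l * (0 - pdx (pdx (pdx f)) t x) - l ^ 2 * (2 * v t x * pdx v t x)) x := by
      have h1 : HasDerivAt (fun y => mean f t - pdx (pdx f) t y)
          (0 - pdx (pdx (pdx f)) t x) x :=
        (hasDerivAt_const x (mean f t)).sub (hasDerivAt_pdx hfxx t x)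
      have h2 : HasDerivAt (fun y => (v t y) ^ 2) (2 * v t x * pdx v t x) x := by
        have := (hasDerivAt_pdx hvc t x).fun_pow 2
        simpa using this
      exact (h1.const_mul l).sub (h2.const_mul (l ^ 2))
    have hB : HasDerivAt
        (fun y => -(pdx (pdx f) t y) / 2 + (f t y - 1 / (2 * l)) * laxm l f v t y)
        (-(pdx (pdx (pdx f)) t x) / 2 + (pdx f t x * laxm l f v t x
          + (f t x - 1 / (2 * l)) * (l * (0 - pdx (pdx (pdx f)) t x)
            - l ^ 2 * (2 * v t x * pdx v t x)))) x :=
      ((hasDerivAt_pdx hfxx t x).neg.div_const 2).add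
        (((hasDerivAt_pdx hfc t x).sub_const _).mul hmx)
    have h := Matrix.ext_iff.mpr (hzc l hl t x) 1 0
    have eU00 : ∀ s y, laxU l f v s y 0 0 = 0 := fun _ _ => rfl
    have eU01 : ∀ s y, laxU l f v s y 0 1 = 1 := fun _ _ => rfl
    have eU10 : ∀ s y, laxU l f v s y 1 0 = laxm l f v s y := fun _ _ => rfl
    have eU11 : ∀ s y, laxU l f v s y 1 1 = 0 := fun _ _ => rfl
    have eV00 : ∀ s y, laxV l f v s y 0 0 = -(pdx f s y) / 2 := fun _ _ => rfl
    have eV10 : ∀ s y, laxV l f v s y 1 0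
        = -(pdx (pdx f) s y) / 2 + (f s y - 1 / (2 * l)) * laxm l f v s y := fun _ _ => rfl
    have eV11 : ∀ s y, laxV l f v s y 1 1 = pdx f s y / 2 := fun _ _ => rfl
    simp only [mpdt, mpdx, Matrix.sub_apply, Matrix.add_apply, Matrix.mul_apply,
      Fin.sum_univ_two, Matrix.of_apply, Matrix.zero_apply,
      eU00, eU01, eU10, eU11, eV00, eV10, eV11, mul_zero, zero_mul, add_zero, zero_add,
      one_mul] at h
    rw [hA.deriv, hB.deriv] at h
    simp only [laxm] at h
    have hinv : l * l⁻¹ = 1 := mul_inv_cancel₀ hlne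
    have hmain : l * (((∫ y in (0:ℝ)..1, pdt f t y) - pdt (pdx (pdx f)) t x
          - 2 * pdx f t x * mean f t + 2 * pdx f t x * pdx (pdx f) t x
          + f t x * pdx (pdx (pdx f)) t x - v t x * pdx v t x)
        + l * (-(2 * v t x * pdt v t x) + 2 * pdx f t x * (v t x) ^ 2
          + 2 * f t x * v t x * pdx v t x)) = 0 := by
      linear_combination h + (pdx (pdx (pdx f)) t x / 2 + l * v t x * pdx v t x) * hinv
    exact (mul_eq_zero.mp hmain).resolve_left hlne
  have hQ : ∀ t x, -(2 * v t x * pdt v t x) + 2 * pdx f t x * (v t x) ^ 2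
      + 2 * f t x * v t x * pdx v t x = 0 := by
    intro t x
    have h1 := key l₁ (Set.mem_insert _ _) hl₁ t x
    have h2 := key l₂ (Set.mem_insert_of_mem _ rfl) hl₂ t x
    have h3 : (l₁ - l₂) * (-(2 * v t x * pdt v t x) + 2 * pdx f t x * (v t x) ^ 2
        + 2 * f t x * v t x * pdx v t x) = 0 := by linear_combination h1 - h2
    exact (mul_eq_zero.mp h3).resolve_left (sub_ne_zero.mpr hne)
  have hP : ∀ t x, (∫ y in (0:ℝ)..1, pdt f t y) - pdt (pdx (pdx f)) t x
      - 2 * pdx f t x * mean f t + 2 * pdx f t x * pdx (pdx f) t x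
      + f t x * pdx (pdx (pdx f)) t x - v t x * pdx v t x = 0 := by
    intro t x
    have h1 := key l₁ (Set.mem_insert _ _) hl₁ t x
    linear_combination h1 - l₁ * hQ t x
  -- the mean of f_t vanishes
  have hμ0 : ∀ t, (∫ y in (0:ℝ)..1, pdt f t y) = 0 := by
    intro t
    have hmean0 : mean (pdx (pdx f)) = fun _ => (0:ℝ) := by
      funext s
      have hint : ∫ y in (0:ℝ)..1, pdx (pdx f) s y = pdx f s 1 - pdx f s 0 :=
        intervalIntegral.integral_eq_sub_of_hasDerivAt
          (fun y _ => hasDerivAt_pdx hfx s y)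
          ((continuous_slice hfxx s).intervalIntegrable 0 1)
      show (∫ y in (0:ℝ)..1, pdx (pdx f) s y) = 0
      rw [hint, show pdx f s 1 = pdx f s 0 from by simpa using hfxp s 0, sub_self]
    have hIfxxt : (∫ y in (0:ℝ)..1, pdt (pdx (pdx f)) t y) = 0 := by
      have hd := hasDerivAt_mean hfxx t
      rw [hmean0] at hd
      exact hd.unique (hasDerivAt_const t 0)
    have hGy : ∀ y, HasDerivAt
        (fun y => 2 * mean f t * f t y - f t y * pdx (pdx f) t y
          - (pdx f t y) ^ 2 / 2 + (v t y) ^ 2 / 2)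
        (2 * mean f t * pdx f t y
          - (pdx f t y * pdx (pdx f) t y + f t y * pdx (pdx (pdx f)) t y)
          - pdx f t y * pdx (pdx f) t y + v t y * pdx v t y) y := by
      intro y
      have h1 := ((hasDerivAt_pdx hfc t y).const_mul (2 * mean f t)).sub
          ((hasDerivAt_pdx hfc t y).mul (hasDerivAt_pdx hfxx t y))
      have h2 := ((hasDerivAt_pdx hfx t y).pow 2).div_const 2
      have h3 := ((hasDerivAt_pdx hvc t y).pow 2).div_const 2
      have h4 := (h1.sub h2).add h3
      have e : (2 * mean f t * pdx f t y
            - (pdx f t y * pdx (pdx f) t y + f t y * pdx (pdx (pdx f)) t y)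
            - (2 : ℕ) * pdx f t y ^ (2 - 1) * pdx (pdx f) t y / 2
            + (2 : ℕ) * v t y ^ (2 - 1) * pdx v t y / 2)
          = (2 * mean f t * pdx f t y
            - (pdx f t y * pdx (pdx f) t y + f t y * pdx (pdx (pdx f)) t y)
            - pdx f t y * pdx (pdx f) t y + v t y * pdx v t y) := by
        push_cast
        ring
      exact e ▸ h4
    have c2 : Continuous fun y => pdx f t y * pdx (pdx f) t y :=
      (continuous_slice hfx t).mul (continuous_slice hfxx t)
    have hg_cont : Continuous (fun y => 2 * mean f t * pdx f t y
        - (pdx f t y * pdx (pdx f) t y + f t y * pdx (pdx (pdx f)) t y)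
        - pdx f t y * pdx (pdx f) t y + v t y * pdx v t y) := by
      have c1 : Continuous fun y => 2 * mean f t * pdx f t y :=
        continuous_const.mul (continuous_slice hfx t)
      have c3 : Continuous fun y => f t y * pdx (pdx (pdx f)) t y :=
        (continuous_slice hfc t).mul (continuous_slice (contDiff_pdx hfxx) t)
      have c4 : Continuous fun y => v t y * pdx v t y :=
        (continuous_slice hvc t).mul (continuous_slice (contDiff_pdx hvc) t)
      exact ((c1.sub (c2.add c3)).sub c2).add c4
    have hIg : (∫ y in (0:ℝ)..1, (2 * mean f t * pdx f t y
        - (pdx f t y * pdx (pdx f) t y + f t y * pdx (pdx (pdx f)) t y)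
        - pdx f t y * pdx (pdx f) t y + v t y * pdx v t y)) = 0 := by
      rw [intervalIntegral.integral_eq_sub_of_hasDerivAt (fun y _ => hGy y)
        (hg_cont.intervalIntegrable 0 1)]
      rw [show (1:ℝ) = 0 + 1 by norm_num]
      simp only [hfp, hfxp, hfxxp, hvp, sub_self]
    have hpdtcont : Continuous (fun y => pdt (pdx (pdx f)) t y) :=
      continuous_slice (contDiff_pdt hfxx) t
    have hcongr : (∫ y in (0:ℝ)..1, (∫ z in (0:ℝ)..1, pdt f t z))
        = ∫ y in (0:ℝ)..1, (pdt (pdx (pdx f)) t y + (2 * mean f t * pdx f t y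
          - (pdx f t y * pdx (pdx f) t y + f t y * pdx (pdx (pdx f)) t y)
          - pdx f t y * pdx (pdx f) t y + v t y * pdx v t y)) := by
      refine intervalIntegral.integral_congr fun y _ => ?_
      have := hP t y
      linarith
    have hsplit : (∫ y in (0:ℝ)..1, (pdt (pdx (pdx f)) t y + (2 * mean f t * pdx f t y
          - (pdx f t y * pdx (pdx f) t y + f t y * pdx (pdx (pdx f)) t y)
          - pdx f t y * pdx (pdx f) t y + v t y * pdx v t y)))
        = (∫ y in (0:ℝ)..1, pdt (pdx (pdx f)) t y)
          + ∫ y in (0:ℝ)..1, (2 * mean f t * pdx f t y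
          - (pdx f t y * pdx (pdx f) t y + f t y * pdx (pdx (pdx f)) t y)
          - pdx f t y * pdx (pdx f) t y + v t y * pdx v t y) :=
      intervalIntegral.integral_add (hpdtcont.intervalIntegrable 0 1)
        (hg_cont.intervalIntegrable 0 1)
    have hconst : (∫ y in (0:ℝ)..1, (∫ z in (0:ℝ)..1, pdt f t z))
        = ∫ z in (0:ℝ)..1, pdt f t z := by simp
    rw [← hconst, hcongr, hsplit, hIfxxt, hIg, zero_add]
  constructor
  · intro t x
    linear_combination hP t x - hμ0 t
  · intro t x
    have hprod : pdx (fun t x => v t x * f t x) t x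
        = pdx v t x * f t x + v t x * pdx f t x :=
      ((hasDerivAt_pdx hvc t x).mul (hasDerivAt_pdx hfc t x)).deriv
    have h2 : v t x * pdt v t x = v t x * (pdx v t x * f t x + v t x * pdx f t x) := by
      linear_combination (-1/2 : ℝ) * hQ t x
    have h3 := mul_left_cancel₀ (hvne t x) h2
    rw [hprod]
    linear_combination h3
end
end

section
/- Let γ₁, γ₂, γ₃ ∈ ℝ and let f, φ be smooth x-periodic functions satisfying the Euler–Lagrange system: −f_{xt} = μ(f²) + 2μ(f)f − ½f_x² − ff_{xx} + ½φ_x² − γ₁f_{xx} + γ₂φ_{xx} and φ_{xt} = (fφ_x)_x − γ₂f_{xx} + 2γ₃φ_{xx} at every point. Then the pair (f, v) with v = φ_x solves the 2-μHS system with parameters γ₁, γ₂, γ₃. -/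
open MeasureTheory

noncomputable section

namespace TwoMuHSAux

def Dv (a : ℝ × ℝ) (u : ℝ × ℝ → ℝ) : ℝ × ℝ → ℝ := fun p => fderiv ℝ u p a

lemma Dv_contDiff {u : ℝ × ℝ → ℝ} (hu : ContDiff ℝ (⊤ : ℕ∞) u) (a : ℝ × ℝ) :
    ContDiff ℝ (⊤ : ℕ∞) (Dv a u) :=
  (ContinuousLinearMap.apply ℝ ℝ a).contDiff.comp (hu.fderiv_right (by simp))

lemma hasDerivAt_x {u : ℝ × ℝ → ℝ} (hu : ContDiff ℝ (⊤ : ℕ∞) u) (t x : ℝ) :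
    HasDerivAt (fun y => u (t, y)) (Dv (0, 1) u (t, x)) x := by
  have h1 : HasDerivAt (fun y : ℝ => ((t, y) : ℝ × ℝ)) ((0 : ℝ), (1 : ℝ)) x :=
    (hasDerivAt_const x t).prodMk (hasDerivAt_id x)
  exact (hu.differentiable (by simp) (t, x)).hasFDerivAt.comp_hasDerivAt x h1

lemma hasDerivAt_t {u : ℝ × ℝ → ℝ} (hu : ContDiff ℝ (⊤ : ℕ∞) u) (t x : ℝ) :
    HasDerivAt (fun s => u (s, x)) (Dv (1, 0) u (t, x)) t := by
  have h1 : HasDerivAt (fun s : ℝ => ((s, x) : ℝ × ℝ)) ((1 : ℝ), (0 : ℝ)) t :=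
    (hasDerivAt_id t).prodMk (hasDerivAt_const t x)
  exact (hu.differentiable (by simp) (t, x)).hasFDerivAt.comp_hasDerivAt t h1

lemma pdx_eq {w : ℝ → ℝ → ℝ} (hw : ContDiff ℝ (⊤ : ℕ∞) (Function.uncurry w)) (t x : ℝ) :
    pdx w t x = Dv (0, 1) (Function.uncurry w) (t, x) :=
  (hasDerivAt_x hw t x).deriv

lemma pdt_eq {w : ℝ → ℝ → ℝ} (hw : ContDiff ℝ (⊤ : ℕ∞) (Function.uncurry w)) (t x : ℝ) :
    pdt w t x = Dv (1, 0) (Function.uncurry w) (t, x) :=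
  (hasDerivAt_t hw t x).deriv

lemma uncurry_pdx {w : ℝ → ℝ → ℝ} (hw : ContDiff ℝ (⊤ : ℕ∞) (Function.uncurry w)) :
    Function.uncurry (pdx w) = Dv (0, 1) (Function.uncurry w) := by
  funext p; exact pdx_eq hw p.1 p.2

lemma uncurry_pdt {w : ℝ → ℝ → ℝ} (hw : ContDiff ℝ (⊤ : ℕ∞) (Function.uncurry w)) :
    Function.uncurry (pdt w) = Dv (1, 0) (Function.uncurry w) := by
  funext p; exact pdt_eq hw p.1 p.2

lemma pdx_contDiff {w : ℝ → ℝ → ℝ} (hw : ContDiff ℝ (⊤ : ℕ∞) (Function.uncurry w)) :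
    ContDiff ℝ (⊤ : ℕ∞) (Function.uncurry (pdx w)) := by
  rw [uncurry_pdx hw]; exact Dv_contDiff hw _

lemma pdt_contDiff {w : ℝ → ℝ → ℝ} (hw : ContDiff ℝ (⊤ : ℕ∞) (Function.uncurry w)) :
    ContDiff ℝ (⊤ : ℕ∞) (Function.uncurry (pdt w)) := by
  rw [uncurry_pdt hw]; exact Dv_contDiff hw _

lemma Dv_apply_eq {u : ℝ × ℝ → ℝ} (hu : ContDiff ℝ (⊤ : ℕ∞) u) (a b p) :
    Dv a (Dv b u) p = fderiv ℝ (fderiv ℝ u) p a b := by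
  have hF : ContDiff ℝ (⊤ : ℕ∞) (fderiv ℝ u) := hu.fderiv_right (by simp)
  have h1 : HasFDerivAt (Dv b u)
      ((ContinuousLinearMap.apply ℝ ℝ b).comp (fderiv ℝ (fderiv ℝ u) p)) p :=
    (ContinuousLinearMap.apply ℝ ℝ b).hasFDerivAt.comp p
      (hF.differentiable (by simp) p).hasFDerivAt
  show fderiv ℝ (Dv b u) p a = _
  rw [h1.fderiv]; rfl

lemma Dv_comm {u : ℝ × ℝ → ℝ} (hu : ContDiff ℝ (⊤ : ℕ∞) u) (a b p) :
    Dv a (Dv b u) p = Dv b (Dv a u) p := by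
  rw [Dv_apply_eq hu, Dv_apply_eq hu]
  exact second_derivative_symmetric (fun y => (hu.differentiable (by simp) y).hasFDerivAt)
    ((hu.fderiv_right (m := (⊤ : ℕ∞)) (by simp)).differentiable (by simp) p).hasFDerivAt a b

lemma pdt_pdx_comm {w : ℝ → ℝ → ℝ} (hw : ContDiff ℝ (⊤ : ℕ∞) (Function.uncurry w)) (t x : ℝ) :
    pdt (pdx w) t x = pdx (pdt w) t x := by
  have h1 : pdt (pdx w) t x = Dv (1, 0) (Dv (0, 1) (Function.uncurry w)) (t, x) := by
    rw [pdt_eq (pdx_contDiff hw) t x, uncurry_pdx hw]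
  have h2 : pdx (pdt w) t x = Dv (0, 1) (Dv (1, 0) (Function.uncurry w)) (t, x) := by
    rw [pdx_eq (pdt_contDiff hw) t x, uncurry_pdt hw]
  rw [h1, h2, Dv_comm hw]

lemma hasDerivAt_slice {w : ℝ → ℝ → ℝ} (hw : ContDiff ℝ (⊤ : ℕ∞) (Function.uncurry w)) (t x : ℝ) :
    HasDerivAt (w t) (pdx w t x) x := by
  rw [pdx_eq hw]; exact hasDerivAt_x hw t x

end TwoMuHSAux

open TwoMuHSAux

/-- Solutions of the Euler–Lagrange system of the second variational principle
give solutions of the 2-μHS system via `v = φ_x`. -/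
theorem eulerLagrange_implies_twoMuHS (γ₁ γ₂ γ₃ : ℝ) (f φ : ℝ → ℝ → ℝ)
    (hf : SmoothXPeriodic f) (hφ : SmoothXPeriodic φ)
    (hEL₁ : ∀ t x, -(pdt (pdx f) t x) =
      mean (fun t x => (f t x) ^ 2) t + 2 * mean f t * f t x
        - (1 / 2) * (pdx f t x) ^ 2 - f t x * pdx (pdx f) t x
        + (1 / 2) * (pdx φ t x) ^ 2 - γ₁ * pdx (pdx f) t x
        + γ₂ * pdx (pdx φ) t x)
    (hEL₂ : ∀ t x, pdt (pdx φ) t x =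
      pdx (fun t x => f t x * pdx φ t x) t x - γ₂ * pdx (pdx f) t x
        + 2 * γ₃ * pdx (pdx φ) t x) :
    Solves2muHS γ₁ γ₂ γ₃ f (pdx φ) := by
  obtain ⟨hfc, -⟩ := hf
  obtain ⟨hφc, -⟩ := hφ
  have hf1 := pdx_contDiff hfc
  have hf2 := pdx_contDiff hf1
  have hφ1 := pdx_contDiff hφc
  constructor
  · intro t x
    -- commute the derivatives
    have hcomm : pdt (pdx (pdx f)) t x = pdx (pdt (pdx f)) t x := pdt_pdx_comm hf1 t x
    -- rewrite pdt (pdx f) t via hEL₁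
    have hfun : (pdt (pdx f) t) = fun x' =>
        -(mean (fun t x => (f t x) ^ 2) t + 2 * mean f t * f t x'
          - (1 / 2) * (pdx f t x') ^ 2 - f t x' * pdx (pdx f) t x'
          + (1 / 2) * (pdx φ t x') ^ 2 - γ₁ * pdx (pdx f) t x'
          + γ₂ * pdx (pdx φ) t x') := by
      funext x'
      have := hEL₁ t x'
      linarith
    -- derivative of the right-hand side
    have Hf0 := hasDerivAt_slice hfc t x
    have Hf1 := hasDerivAt_slice hf1 t x
    have Hf2 := hasDerivAt_slice hf2 t x
    have Hφ1 := hasDerivAt_slice hφ1 t x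
    have Hφ2 := hasDerivAt_slice (pdx_contDiff hφ1) t x
    have H : HasDerivAt (fun x' =>
        mean (fun t x => (f t x) ^ 2) t + 2 * mean f t * f t x'
          - (1 / 2) * (pdx f t x') ^ 2 - f t x' * pdx (pdx f) t x'
          + (1 / 2) * (pdx φ t x') ^ 2 - γ₁ * pdx (pdx f) t x'
          + γ₂ * pdx (pdx φ) t x')
        (0 + 2 * mean f t * pdx f t x
          - 1 / 2 * ((2 : ℕ) * pdx f t x ^ (2 - 1) * pdx (pdx f) t x)
          - (pdx f t x * pdx (pdx f) t x + f t x * pdx (pdx (pdx f)) t x)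
          + 1 / 2 * ((2 : ℕ) * pdx φ t x ^ (2 - 1) * pdx (pdx φ) t x)
          - γ₁ * pdx (pdx (pdx f)) t x
          + γ₂ * pdx (pdx (pdx φ)) t x) x := by
      exact ((((((hasDerivAt_const x _).add (Hf0.const_mul _)).sub
        ((Hf1.pow 2).const_mul _)).sub (Hf0.mul Hf2)).add
        ((Hφ1.pow 2).const_mul _)).sub (Hf2.const_mul γ₁)).add (Hφ2.const_mul γ₂)
    have hderiv : pdx (pdt (pdx f)) t x = deriv (pdt (pdx f) t) x := rfl
    rw [hcomm, hderiv, hfun, H.fun_neg.deriv]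
    push_cast
    ring
  · intro t x
    have : (fun t x => pdx φ t x * f t x) = (fun t x => f t x * pdx φ t x) := by
      funext t x; ring
    rw [this]
    exact hEL₂ t x
end
end

section
/- Let γ₂, γ₃ ∈ ℝ and let f, v, w, z be smooth x-periodic functions satisfying, at every point: f_{xx} = μ(f) + wz_x + γ₂w_x, z_x = v + γ₃w, z_t = fz_x + γ₃v − γ₂f_x, and w_t = (wf)_x − v_x. Then μ(f)(t) is constant in t and the pair (f, v) solves the 2-μHS system with parameters γ₁ = 0, γ₂, γ₃, i.e., −f_{xxt} = 2μ(f)f_x − 2f_xf_{xx} − ff_{xxx} + vv_x + γ₂v_{xx} and v_t = (vf)_x − γ₂f_{xx} + 2γ₃v_x. (First variational principle for the 2-μHS equation.) -/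
open MeasureTheory

noncomputable section

open Function

-- slices are smooth
lemma sliceCD_x {u : ℝ → ℝ → ℝ} (hu : ContDiff ℝ (⊤ : ℕ∞) (uncurry u)) (t : ℝ) :
    ContDiff ℝ (⊤ : ℕ∞) (fun y => u t y) :=
  hu.comp (contDiff_const.prodMk contDiff_id)

lemma sliceCD_t {u : ℝ → ℝ → ℝ} (hu : ContDiff ℝ (⊤ : ℕ∞) (uncurry u)) (x : ℝ) :
    ContDiff ℝ (⊤ : ℕ∞) (fun s => u s x) :=
  hu.comp (contDiff_id.prodMk contDiff_const)

lemma hdx {u : ℝ → ℝ → ℝ} (hu : ContDiff ℝ (⊤ : ℕ∞) (uncurry u)) (t x : ℝ) :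
    HasDerivAt (fun y => u t y) (pdx u t x) x :=
  (((sliceCD_x hu t).differentiable (by simp)) x).hasDerivAt

lemma hdt {u : ℝ → ℝ → ℝ} (hu : ContDiff ℝ (⊤ : ℕ∞) (uncurry u)) (t x : ℝ) :
    HasDerivAt (fun s => u s x) (pdt u t x) t :=
  (((sliceCD_t hu x).differentiable (by simp)) t).hasDerivAt

lemma pdx_eq_fderiv {u : ℝ → ℝ → ℝ} (hu : ContDiff ℝ (⊤ : ℕ∞) (uncurry u)) (t x : ℝ) :
    pdx u t x = fderiv ℝ (uncurry u) (t, x) (0, 1) := by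
  have h1 : HasFDerivAt (fun y : ℝ => ((t, y) : ℝ × ℝ)) (ContinuousLinearMap.inr ℝ ℝ ℝ) x :=
    hasFDerivAt_prodMk_right t x
  have h2 : HasFDerivAt (fun y => u t y)
      ((fderiv ℝ (uncurry u) (t, x)).comp (ContinuousLinearMap.inr ℝ ℝ ℝ)) x :=
    ((hu.differentiable (by simp) (t, x)).hasFDerivAt.comp x h1)
  have h3 := h2.hasDerivAt.deriv
  simpa [pdx, pdt] using h3

lemma pdt_eq_fderiv {u : ℝ → ℝ → ℝ} (hu : ContDiff ℝ (⊤ : ℕ∞) (uncurry u)) (t x : ℝ) :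
    pdt u t x = fderiv ℝ (uncurry u) (t, x) (1, 0) := by
  have h1 : HasFDerivAt (fun s : ℝ => ((s, x) : ℝ × ℝ)) (ContinuousLinearMap.inl ℝ ℝ ℝ) t :=
    hasFDerivAt_prodMk_left t x
  have h2 : HasFDerivAt (fun s => u s x)
      ((fderiv ℝ (uncurry u) (t, x)).comp (ContinuousLinearMap.inl ℝ ℝ ℝ)) t :=
    by have := (hu.differentiable (by simp) (t, x)).hasFDerivAt.comp t h1; exact this
  have h3 := h2.hasDerivAt.deriv
  simpa [pdx, pdt] using h3

lemma pdx_contDiff {u : ℝ → ℝ → ℝ} (hu : ContDiff ℝ (⊤ : ℕ∞) (uncurry u)) :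
    ContDiff ℝ (⊤ : ℕ∞) (uncurry (pdx u)) := by
  have h : (uncurry (pdx u)) = fun p : ℝ × ℝ => fderiv ℝ (uncurry u) p ((0 : ℝ), (1 : ℝ)) := by
    funext p
    exact pdx_eq_fderiv hu p.1 p.2
  rw [h]
  exact (hu.fderiv_right (by simp)).clm_apply contDiff_const

lemma pdt_contDiff {u : ℝ → ℝ → ℝ} (hu : ContDiff ℝ (⊤ : ℕ∞) (uncurry u)) :
    ContDiff ℝ (⊤ : ℕ∞) (uncurry (pdt u)) := by
  have h : (uncurry (pdt u)) = fun p : ℝ × ℝ => fderiv ℝ (uncurry u) p ((1 : ℝ), (0 : ℝ)) := by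
    funext p
    exact pdt_eq_fderiv hu p.1 p.2
  rw [h]
  exact (hu.fderiv_right (by simp)).clm_apply contDiff_const

lemma pdx_sxp {u : ℝ → ℝ → ℝ} (hu : SmoothXPeriodic u) : SmoothXPeriodic (pdx u) := by
  refine ⟨pdx_contDiff hu.1, fun t x => ?_⟩
  have e : (fun y => u t (y + 1)) = u t := funext fun y => hu.2 t y
  have := deriv_comp_add_const (u t) 1 x
  rw [e] at this
  exact this.symm

lemma pdt_sxp {u : ℝ → ℝ → ℝ} (hu : SmoothXPeriodic u) : SmoothXPeriodic (pdt u) := by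
  refine ⟨pdt_contDiff hu.1, fun t x => ?_⟩
  show deriv (fun s => u s (x + 1)) t = deriv (fun s => u s x) t
  congr 1
  funext s
  exact hu.2 s x

lemma clairaut {u : ℝ → ℝ → ℝ} (hu : ContDiff ℝ (⊤ : ℕ∞) (uncurry u)) (t x : ℝ) :
    pdt (pdx u) t x = pdx (pdt u) t x := by
  set F := uncurry u with hF
  have hd : ∀ y, HasFDerivAt F (fderiv ℝ F y) y := fun y =>
    (hu.differentiable (by simp) y).hasFDerivAt
  have hf' : HasFDerivAt (fderiv ℝ F) (fderiv ℝ (fderiv ℝ F) (t, x)) (t, x) :=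
    (((hu.fderiv_right (m := (⊤ : ℕ∞)) (by simp)).differentiable (by simp)) (t, x)).hasFDerivAt
  have sym := second_derivative_symmetric hd hf' ((1 : ℝ), (0 : ℝ)) ((0 : ℝ), (1 : ℝ))
  have e1 : pdt (pdx u) t x = fderiv ℝ (fderiv ℝ F) (t, x) (1, 0) (0, 1) := by
    have hG : HasFDerivAt (fun p : ℝ × ℝ => fderiv ℝ F p ((0 : ℝ), (1 : ℝ)))
        ((ContinuousLinearMap.apply ℝ ℝ ((0 : ℝ), (1 : ℝ))).comp
          (fderiv ℝ (fderiv ℝ F) (t, x))) (t, x) :=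
      (ContinuousLinearMap.apply ℝ ℝ ((0 : ℝ), (1 : ℝ))).hasFDerivAt.comp (t, x) hf'
    have hs : HasDerivAt (fun s => fderiv ℝ F (s, x) ((0 : ℝ), (1 : ℝ)))
        (fderiv ℝ (fderiv ℝ F) (t, x) (1, 0) (0, 1)) t := by
      have h2 : HasFDerivAt (fun s : ℝ => fderiv ℝ F (s, x) ((0 : ℝ), (1 : ℝ)))
          (((ContinuousLinearMap.apply ℝ ℝ ((0 : ℝ), (1 : ℝ))).comp
            (fderiv ℝ (fderiv ℝ F) (t, x))).comp (ContinuousLinearMap.inl ℝ ℝ ℝ)) t :=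
        by have := hG.comp t (hasFDerivAt_prodMk_left t x :
          HasFDerivAt (fun s : ℝ => ((s, x) : ℝ × ℝ)) (ContinuousLinearMap.inl ℝ ℝ ℝ) t); exact this
      simpa using h2.hasDerivAt
    have hfun : (fun s => pdx u s x) = fun s => fderiv ℝ F (s, x) ((0 : ℝ), (1 : ℝ)) :=
      funext fun s => pdx_eq_fderiv hu s x
    show deriv (fun s => pdx u s x) t = _
    rw [hfun]
    exact hs.deriv
  have e2 : pdx (pdt u) t x = fderiv ℝ (fderiv ℝ F) (t, x) (0, 1) (1, 0) := by
    have hG : HasFDerivAt (fun p : ℝ × ℝ => fderiv ℝ F p ((1 : ℝ), (0 : ℝ)))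
        ((ContinuousLinearMap.apply ℝ ℝ ((1 : ℝ), (0 : ℝ))).comp
          (fderiv ℝ (fderiv ℝ F) (t, x))) (t, x) :=
      (ContinuousLinearMap.apply ℝ ℝ ((1 : ℝ), (0 : ℝ))).hasFDerivAt.comp (t, x) hf'
    have hs : HasDerivAt (fun y => fderiv ℝ F (t, y) ((1 : ℝ), (0 : ℝ)))
        (fderiv ℝ (fderiv ℝ F) (t, x) (0, 1) (1, 0)) x := by
      have h2 : HasFDerivAt (fun y : ℝ => fderiv ℝ F (t, y) ((1 : ℝ), (0 : ℝ)))
          (((ContinuousLinearMap.apply ℝ ℝ ((1 : ℝ), (0 : ℝ))).comp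
            (fderiv ℝ (fderiv ℝ F) (t, x))).comp (ContinuousLinearMap.inr ℝ ℝ ℝ)) x :=
        hG.comp x (hasFDerivAt_prodMk_right t x)
      simpa using h2.hasDerivAt
    have hfun : (fun y => pdt u t y) = fun y => fderiv ℝ F (t, y) ((1 : ℝ), (0 : ℝ)) :=
      funext fun y => pdt_eq_fderiv hu t y
    show deriv (fun y => pdt u t y) x = _
    rw [hfun]
    exact hs.deriv
  rw [e1, e2, sym]

lemma integral_pdx_eq_zero {u : ℝ → ℝ → ℝ} (hu : SmoothXPeriodic u) (t : ℝ) :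
    ∫ x in (0:ℝ)..1, pdx u t x = 0 := by
  have h := intervalIntegral.integral_eq_sub_of_hasDerivAt
    (f := fun y => u t y) (f' := fun y => pdx u t y) (a := (0:ℝ)) (b := 1)
    (fun y _ => hdx hu.1 t y)
    (((sliceCD_x (pdx_contDiff hu.1) t).continuous).intervalIntegrable 0 1)
  rw [h]
  have h1 := hu.2 t 0
  rw [zero_add] at h1
  show u t 1 - u t 0 = 0
  rw [h1, sub_self]

/-- First variational principle: solutions of the constrained system in
`(f, v, w, z)` give 2-μHS solutions with `γ₁ = 0` and conserved mean. -/
theorem firstVariationalPrinciple (γ₂ γ₃ : ℝ) (f v w z : ℝ → ℝ → ℝ)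
    (hf : SmoothXPeriodic f) (hv : SmoothXPeriodic v)
    (hw : SmoothXPeriodic w) (hz : SmoothXPeriodic z)
    (h₁ : ∀ t x, pdx (pdx f) t x =
      mean f t + w t x * pdx z t x + γ₂ * pdx w t x)
    (h₂ : ∀ t x, pdx z t x = v t x + γ₃ * w t x)
    (h₃ : ∀ t x, pdt z t x =
      f t x * pdx z t x + γ₃ * v t x - γ₂ * pdx f t x)
    (h₄ : ∀ t x, pdt w t x =
      pdx (fun t x => w t x * f t x) t x - pdx v t x) :
    (∀ t, deriv (mean f) t = 0) ∧ Solves2muHS 0 γ₂ γ₃ f v := by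
  have cf1 : SmoothXPeriodic (pdx f) := pdx_sxp hf
  have cf2 : SmoothXPeriodic (pdx (pdx f)) := pdx_sxp cf1
  have cf3 : SmoothXPeriodic (pdx (pdx (pdx f))) := pdx_sxp cf2
  have cv1 : SmoothXPeriodic (pdx v) := pdx_sxp hv
  have cv2 : SmoothXPeriodic (pdx (pdx v)) := pdx_sxp cv1
  have cw1 : SmoothXPeriodic (pdx w) := pdx_sxp hw
  have cz1 : SmoothXPeriodic (pdx z) := pdx_sxp hz
  have ctf1 : SmoothXPeriodic (pdt (pdx f)) := pdt_sxp cf1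
  have hPwf : ∀ t x, pdx (fun t x => w t x * f t x) t x
      = pdx w t x * f t x + w t x * pdx f t x := by
    intro t x
    show deriv (fun y => w t y * f t y) x = _
    exact ((hdx hw.1 t x).mul (hdx hf.1 t x)).deriv
  have hPvf : ∀ t x, pdx (fun t x => v t x * f t x) t x
      = pdx v t x * f t x + v t x * pdx f t x := by
    intro t x
    show deriv (fun y => v t y * f t y) x = _
    exact ((hdx hv.1 t x).mul (hdx hf.1 t x)).deriv
  have h₄' : ∀ t x, pdt w t x = pdx w t x * f t x + w t x * pdx f t x - pdx v t x := by
    intro t x; rw [h₄ t x, hPwf t x]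
  have d2x : ∀ t x, pdx (pdx z) t x = pdx v t x + γ₃ * pdx w t x := by
    intro t x
    have e : (fun y => pdx z t y) = fun y => v t y + γ₃ * w t y := funext fun y => h₂ t y
    show deriv (fun y => pdx z t y) x = _
    rw [e]
    exact ((hdx hv.1 t x).add ((hdx hw.1 t x).const_mul γ₃)).deriv
  have d1x : ∀ t x, pdx (pdx (pdx f)) t x =
      pdx w t x * pdx z t x + w t x * pdx (pdx z) t x + γ₂ * pdx (pdx w) t x := by
    intro t x
    have e : (fun y => pdx (pdx f) t y)
        = fun y => mean f t + w t y * pdx z t y + γ₂ * pdx w t y :=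
      funext fun y => h₁ t y
    show deriv (fun y => pdx (pdx f) t y) x = _
    rw [e]
    have h := (((hasDerivAt_const x (mean f t)).add ((hdx hw.1 t x).mul (hdx cz1.1 t x))).add
      ((hdx cw1.1 t x).const_mul γ₂)).deriv
    erw [h]; try ring
  have d3x : ∀ t x, pdx (pdt z) t x =
      pdx f t x * pdx z t x + f t x * pdx (pdx z) t x + γ₃ * pdx v t x
        - γ₂ * pdx (pdx f) t x := by
    intro t x
    have e : (fun y => pdt z t y)
        = fun y => f t y * pdx z t y + γ₃ * v t y - γ₂ * pdx f t y :=
      funext fun y => h₃ t y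
    show deriv (fun y => pdt z t y) x = _
    rw [e]
    have h := ((((hdx hf.1 t x).mul (hdx cz1.1 t x)).add ((hdx hv.1 t x).const_mul γ₃)).sub
      ((hdx cf1.1 t x).const_mul γ₂)).deriv
    erw [h]; try ring
  have d4x : ∀ t x, pdx (pdt w) t x =
      pdx (pdx w) t x * f t x + 2 * pdx w t x * pdx f t x + w t x * pdx (pdx f) t x
        - pdx (pdx v) t x := by
    intro t x
    have e : (fun y => pdt w t y)
        = fun y => pdx w t y * f t y + w t y * pdx f t y - pdx v t y :=
      funext fun y => h₄' t y
    show deriv (fun y => pdt w t y) x = _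
    rw [e]
    have h := ((((hdx cw1.1 t x).mul (hdx hf.1 t x)).add ((hdx hw.1 t x).mul (hdx cf1.1 t x))).sub
      (hdx cv1.1 t x)).deriv
    erw [h]; try ring
  have dvt : ∀ t x, pdt v t x = pdx (pdt z) t x - γ₃ * pdt w t x := by
    intro t x
    have e : (fun s => v s x) = fun s => pdx z s x - γ₃ * w s x := by
      funext s; have := h₂ s x; linarith
    show deriv (fun s => v s x) t = _
    rw [e]
    have h := ((hdt cz1.1 t x).sub ((hdt hw.1 t x).const_mul γ₃)).deriv
    erw [h, clairaut hz.1 t x]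
  have hmeanD : ∀ t x, HasDerivAt (mean f)
      (pdt (pdx (pdx f)) t x - (pdt w t x * pdx z t x + w t x * pdt (pdx z) t x)
        - γ₂ * pdt (pdx w) t x) t := by
    intro t x
    have e : mean f = fun s => pdx (pdx f) s x - w s x * pdx z s x - γ₂ * pdx w s x := by
      funext s; have := h₁ s x; linarith
    rw [e]
    exact ((hdt cf2.1 t x).sub ((hdt hw.1 t x).mul (hdt cz1.1 t x))).sub
      ((hdt cw1.1 t x).const_mul γ₂)
  have key : ∀ t x, pdt (pdx (pdx f)) t x = deriv (mean f) t
      - (2 * mean f t * pdx f t x - 2 * pdx f t x * pdx (pdx f) t x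
        - f t x * pdx (pdx (pdx f)) t x + v t x * pdx v t x + γ₂ * pdx (pdx v) t x) := by
    intro t x
    have hc := (hmeanD t x).deriv
    have E5 := h₄' t x
    have E6 : pdt (pdx z) t x = pdx f t x * pdx z t x + f t x * pdx (pdx z) t x
        + γ₃ * pdx v t x - γ₂ * pdx (pdx f) t x := (clairaut hz.1 t x).trans (d3x t x)
    have E7 : pdt (pdx w) t x = pdx (pdx w) t x * f t x + 2 * pdx w t x * pdx f t x
        + w t x * pdx (pdx f) t x - pdx (pdx v) t x := (clairaut hw.1 t x).trans (d4x t x)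
    have A := h₁ t x
    have B := h₂ t x
    have D := d1x t x
    linear_combination -hc + pdx z t x * E5 + w t x * E6 + γ₂ * E7 - 2 * pdx f t x * A
      - f t x * D - pdx v t x * B
  have hmean0 : ∀ t, deriv (mean f) t = 0 := by
    intro t
    have contf := (sliceCD_x hf.1 t).continuous
    have contf1 := (sliceCD_x cf1.1 t).continuous
    have contf2 := (sliceCD_x cf2.1 t).continuous
    have contf3 := (sliceCD_x cf3.1 t).continuous
    have contv := (sliceCD_x hv.1 t).continuous
    have contv1 := (sliceCD_x cv1.1 t).continuous
    have contv2 := (sliceCD_x cv2.1 t).continuous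
    have hRcont : Continuous (fun x => 2 * mean f t * pdx f t x
        - 2 * pdx f t x * pdx (pdx f) t x - f t x * pdx (pdx (pdx f)) t x
        + v t x * pdx v t x + γ₂ * pdx (pdx v) t x) :=
      ((((continuous_const.mul contf1).sub ((continuous_const.mul contf1).mul contf2)).sub
        (contf.mul contf3)).add (contv.mul contv1)).add (continuous_const.mul contv2)
    have hRint : IntervalIntegrable (fun x => 2 * mean f t * pdx f t x
        - 2 * pdx f t x * pdx (pdx f) t x - f t x * pdx (pdx (pdx f)) t x
        + v t x * pdx v t x + γ₂ * pdx (pdx v) t x) MeasureTheory.volume (0:ℝ) 1 :=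
      hRcont.intervalIntegrable (0:ℝ) 1
    have hS : ∀ x ∈ Set.uIcc (0:ℝ) 1, HasDerivAt
        (fun y => 2 * mean f t * f t y - pdx f t y * pdx f t y / 2
          - f t y * pdx (pdx f) t y + v t y * v t y / 2 + γ₂ * pdx v t y)
        (2 * mean f t * pdx f t x - 2 * pdx f t x * pdx (pdx f) t x
          - f t x * pdx (pdx (pdx f)) t x + v t x * pdx v t x + γ₂ * pdx (pdx v) t x) x := by
      intro x _
      have h := (((((hdx hf.1 t x).const_mul (2 * mean f t)).sub
          (((hdx cf1.1 t x).mul (hdx cf1.1 t x)).div_const 2)).sub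
          ((hdx hf.1 t x).mul (hdx cf2.1 t x))).add
          (((hdx hv.1 t x).mul (hdx hv.1 t x)).div_const 2)).add
          ((hdx cv1.1 t x).const_mul γ₂)
      exact h.congr_deriv (by ring)
    have hIR : (∫ x in (0:ℝ)..1, (2 * mean f t * pdx f t x
        - 2 * pdx f t x * pdx (pdx f) t x - f t x * pdx (pdx (pdx f)) t x
        + v t x * pdx v t x + γ₂ * pdx (pdx v) t x)) = 0 := by
      rw [intervalIntegral.integral_eq_sub_of_hasDerivAt hS hRint]
      have p1 := hf.2 t 0
      have p2 := cf1.2 t 0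
      have p3 := cf2.2 t 0
      have p4 := hv.2 t 0
      have p5 := cv1.2 t 0
      rw [zero_add] at p1 p2 p3 p4 p5
      simp only [p1, p2, p3, p4, p5]
      ring
    have hI1 : (∫ x in (0:ℝ)..1, pdt (pdx (pdx f)) t x) = 0 := by
      rw [intervalIntegral.integral_congr (g := fun x => pdx (pdt (pdx f)) t x)
        (fun x _ => clairaut cf1.1 t x)]
      exact integral_pdx_eq_zero ctf1 t
    have hcomb : (0:ℝ) = deriv (mean f) t - 0 := by
      calc (0:ℝ) = ∫ x in (0:ℝ)..1, pdt (pdx (pdx f)) t x := hI1.symm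
        _ = ∫ x in (0:ℝ)..1, (deriv (mean f) t - (2 * mean f t * pdx f t x
            - 2 * pdx f t x * pdx (pdx f) t x - f t x * pdx (pdx (pdx f)) t x
            + v t x * pdx v t x + γ₂ * pdx (pdx v) t x)) :=
          intervalIntegral.integral_congr (fun x _ => key t x)
        _ = (∫ _x in (0:ℝ)..1, deriv (mean f) t) - ∫ x in (0:ℝ)..1,
            (2 * mean f t * pdx f t x - 2 * pdx f t x * pdx (pdx f) t x
              - f t x * pdx (pdx (pdx f)) t x + v t x * pdx v t x
              + γ₂ * pdx (pdx v) t x) :=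
          intervalIntegral.integral_sub intervalIntegrable_const hRint
        _ = deriv (mean f) t - 0 := by
          rw [hIR, intervalIntegral.integral_const]
          simp
    linarith
  refine ⟨hmean0, ?_, ?_⟩
  · intro t x
    have k := key t x
    rw [hmean0 t] at k
    linear_combination -k
  · intro t x
    have hd := dvt t x
    have E6 := d3x t x
    have E5 := h₄' t x
    have B := h₂ t x
    have C := d2x t x
    have P := hPvf t x
    linear_combination hd + E6 - γ₃ * E5 + pdx f t x * B + f t x * C - P
end
end

section
/- Fix γ₁, γ₂, γ₃ ∈ ℝ, set γ̃₃ = γ₃ − γ₁/2, and define the first Lagrangian density L₁ = ½f_x² + ½μ(f)f + ½v² − vz_x + w(fz_x − z_t + γ̃₃v) + γ₂w_xf − 2γ₁f. Let f, v, w, z be smooth x-periodic functions satisfying at every point the constraint equations f_{xx} = μ(f) + wz_x + γ₂w_x − 2γ₁ and z_x = v + γ̃₃w. Then the Legendre-transformed density satisfies pointwise −z_tw − L₁ = ½μ(f)f − ½f_x² + ½v² − ff_{xx}, and consequently ∫₀¹ (−z_tw − L₁) dx = ½∫₀¹ ( f·(μ(f) − f_{xx}) + v² ) dx = H₁, the first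 Hamiltonian of the 2-μHS equation. -/
open MeasureTheory

noncomputable section

/-- The first Lagrangian density `L₁`, with `γ̃₃ = γ₃ - γ₁/2`. -/
def L₁ (γ₁ γ₂ γ₃ : ℝ) (f v w z : ℝ → ℝ → ℝ) (t x : ℝ) : ℝ :=
  (1 / 2) * (pdx f t x) ^ 2 + (1 / 2) * mean f t * f t x + (1 / 2) * (v t x) ^ 2
    - v t x * pdx z t x
    + w t x * (f t x * pdx z t x - pdt z t x + (γ₃ - γ₁ / 2) * v t x)
    + γ₂ * pdx w t x * f t x - 2 * γ₁ * f t x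

/-- Legendre transform of the first Lagrangian density yields the first
Hamiltonian `H₁` of the 2-μHS equation. -/
theorem legendre_L₁_eq_H₁ (γ₁ γ₂ γ₃ : ℝ) (f v w z : ℝ → ℝ → ℝ)
    (hf : SmoothXPeriodic f) (hv : SmoothXPeriodic v)
    (hw : SmoothXPeriodic w) (hz : SmoothXPeriodic z)
    (h₁ : ∀ t x, pdx (pdx f) t x =
      mean f t + w t x * pdx z t x + γ₂ * pdx w t x - 2 * γ₁)
    (h₂ : ∀ t x, pdx z t x = v t x + (γ₃ - γ₁ / 2) * w t x) :
    (∀ t x, -(pdt z t x) * w t x - L₁ γ₁ γ₂ γ₃ f v w z t x =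
      (1 / 2) * mean f t * f t x - (1 / 2) * (pdx f t x) ^ 2
        + (1 / 2) * (v t x) ^ 2 - f t x * pdx (pdx f) t x) ∧
    (∀ t, (∫ x in (0:ℝ)..1, (-(pdt z t x) * w t x - L₁ γ₁ γ₂ γ₃ f v w z t x)) =
      (1 / 2) * ∫ x in (0:ℝ)..1,
        (f t x * (mean f t - pdx (pdx f) t x) + (v t x) ^ 2)) := by

  have hpt : ∀ t x, -(pdt z t x) * w t x - L₁ γ₁ γ₂ γ₃ f v w z t x =
      (1 / 2) * mean f t * f t x - (1 / 2) * (pdx f t x) ^ 2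
        + (1 / 2) * (v t x) ^ 2 - f t x * pdx (pdx f) t x := by
    intro t x
    rw [L₁, h₁ t x, h₂ t x]
    ring
  refine ⟨hpt, fun t => ?_⟩
  have hft : ContDiff ℝ (⊤ : ℕ∞) (f t) := hf.1.comp (contDiff_const.prodMk contDiff_id)
  have hvt : ContDiff ℝ (⊤ : ℕ∞) (v t) := hv.1.comp (contDiff_const.prodMk contDiff_id)
  have hft' : ContDiff ℝ ((⊤ : ℕ∞) : WithTop ℕ∞) (f t) := hft.of_le (by simp)
  have hdf : ContDiff ℝ ((⊤ : ℕ∞) : WithTop ℕ∞) (deriv (f t)) := (contDiff_infty_iff_deriv.mp hft').2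
  have hddf : ContDiff ℝ ((⊤ : ℕ∞) : WithTop ℕ∞) (deriv (deriv (f t))) := (contDiff_infty_iff_deriv.mp hdf).2
  have hper : Function.Periodic (f t) 1 := fun x => hf.2 t x
  have hone : ((⊤ : ℕ∞) : WithTop ℕ∞) ≠ 0 := by simp
  have hdper : Function.Periodic (deriv (f t)) 1 := by
    intro x
    have h1 : HasDerivAt (fun y : ℝ => f t (y + 1)) (deriv (f t) (x + 1) * 1) x :=
      ((hft'.differentiable hone (x + 1)).hasDerivAt).comp x ((hasDerivAt_id x).add_const 1)
    have heq : (fun y : ℝ => f t (y + 1)) = f t := funext fun y => hper y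
    rw [heq, mul_one] at h1
    rw [h1.deriv]
  have key : (∫ x in (0:ℝ)..1, (deriv (f t) x ^ 2 + f t x * deriv (deriv (f t)) x)) = 0 := by
    have hd : ∀ x ∈ Set.uIcc (0:ℝ) 1,
        HasDerivAt (fun y => f t y * deriv (f t) y)
          (deriv (f t) x ^ 2 + f t x * deriv (deriv (f t)) x) x := by
      intro x _
      have h1 := (hft'.differentiable hone x).hasDerivAt
      have h2 := (hdf.differentiable hone x).hasDerivAt
      have := h1.mul h2
      refine this.congr_deriv ?_
      ring
    have hint : IntervalIntegrable
        (fun x => deriv (f t) x ^ 2 + f t x * deriv (deriv (f t)) x)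
        volume 0 1 :=
      (((hdf.continuous.pow 2).add (hft.continuous.mul hddf.continuous))).intervalIntegrable 0 1
    rw [intervalIntegral.integral_eq_sub_of_hasDerivAt hd hint]
    have e1 : f t 1 = f t 0 := by simpa using hper 0
    have e2 : deriv (f t) 1 = deriv (f t) 0 := by simpa using hdper 0
    rw [e1, e2]; ring
  have hpw : ∀ x, -(pdt z t x) * w t x - L₁ γ₁ γ₂ γ₃ f v w z t x =
      (1 / 2) * (f t x * (mean f t - deriv (deriv (f t)) x) + (v t x) ^ 2)
        - (1 / 2) * (deriv (f t) x ^ 2 + f t x * deriv (deriv (f t)) x) := by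
    intro x
    have hpdx2 : pdx (pdx f) t x = deriv (deriv (f t)) x := rfl
    have hpdx1 : pdx f t x = deriv (f t) x := rfl
    rw [hpt t x, hpdx2, hpdx1]
    ring
  have hA : IntervalIntegrable
      (fun x => (1 / 2) * (f t x * (mean f t - deriv (deriv (f t)) x) + (v t x) ^ 2))
      volume 0 1 :=
    (continuous_const.mul ((hft.continuous.mul (continuous_const.sub hddf.continuous)).add
      (hvt.continuous.pow 2))).intervalIntegrable 0 1
  have hB : IntervalIntegrable
      (fun x => (1 / 2) * (deriv (f t) x ^ 2 + f t x * deriv (deriv (f t)) x))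
      volume 0 1 :=
    (continuous_const.mul ((hdf.continuous.pow 2).add
      (hft.continuous.mul hddf.continuous))).intervalIntegrable 0 1
  calc (∫ x in (0:ℝ)..1, (-(pdt z t x) * w t x - L₁ γ₁ γ₂ γ₃ f v w z t x))
      = ∫ x in (0:ℝ)..1,
          ((1 / 2) * (f t x * (mean f t - deriv (deriv (f t)) x) + (v t x) ^ 2)
            - (1 / 2) * (deriv (f t) x ^ 2 + f t x * deriv (deriv (f t)) x)) := by
        exact intervalIntegral.integral_congr (fun x _ => hpw x)
    _ = (∫ x in (0:ℝ)..1,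
          (1 / 2) * (f t x * (mean f t - deriv (deriv (f t)) x) + (v t x) ^ 2))
        - ∫ x in (0:ℝ)..1,
          (1 / 2) * (deriv (f t) x ^ 2 + f t x * deriv (deriv (f t)) x) :=
        intervalIntegral.integral_sub hA hB
    _ = (1 / 2) * ∫ x in (0:ℝ)..1,
          (f t x * (mean f t - pdx (pdx f) t x) + (v t x) ^ 2) := by
        have hpdx2 : ∀ x, pdx (pdx f) t x = deriv (deriv (f t)) x := fun _ => rfl
        rw [intervalIntegral.integral_const_mul, intervalIntegral.integral_const_mul, key]
        simp only [hpdx2]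
        ring
end
end
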